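/- Let f be a proper closed convex function on ℝⁿ with minimizer x*, ‖x_0 − x*‖ ≤ R, and x_i = prox_{α_i f}(x_{i−1}) for positive step sizes α_i. Then f(x_N) − f(x*) ≤ R² / (4 Σ_{i=1}^N α_i). -/

import Mathlib

/-!
Each proximal step `x⁺` from `x` with step `α` satisfies the subgradient inequality
`⟪x - x⁺, z - x⁺⟫ ≤ α (f z - f x⁺)` for every `z` (compare the prox objective at `x⁺ + t (z - x⁺)`
and let `t → 0⁺`). With `s_m = α_1 + ⋯ + α_m` and `L = s_N`, the Lyapunov function
`s_m / (2L - s_m) · (f x_m - f x⋆) + (L - s_m) / (2L - s_m)² · ‖x_m - x⋆‖²`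
does not increase along the iterates: its decrease is a nonnegative combination of the
subgradient inequalities at `z = x⋆` and `z = x_{m-1}` plus a perfect square. It equals
`‖x_0 - x⋆‖² / (4L)` at `m = 0` and `f x_N - f x⋆` at `m = N`.
-/

open Finset Filter Topology
open scoped RealInnerProductSpace

lemma nonneg_of_forall_mem_Ioc_nonneg_add_mul {K c : ℝ}
    (h : ∀ t ∈ Set.Ioc (0 : ℝ) 1, 0 ≤ K + t * c) : 0 ≤ K := by
  have hlim : Tendsto (fun t : ℝ => K + t * c) (𝓝[>] 0) (𝓝 K) := by
    have : Continuous fun t : ℝ => K + t * c := by fun_prop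
    simpa using (this.tendsto 0).mono_left nhdsWithin_le_nhds
  exact ge_of_tendsto hlim (eventually_of_mem (Ioc_mem_nhdsGT one_pos) h)

variable {E : Type*} [NormedAddCommGroup E] [InnerProductSpace ℝ E]

theorem inner_sub_le_of_isMinOn_prox {f : E → ℝ} (hf : ConvexOn ℝ Set.univ f) {α : ℝ} (hα : 0 ≤ α)
    {x p : E} (hp : IsMinOn (fun z => α * f z + ‖z - x‖ ^ 2 / 2) Set.univ p) (z : E) :
    ⟪x - p, z - p⟫ ≤ α * (f z - f p) := by
  suffices 0 ≤ α * (f z - f p) - ⟪x - p, z - p⟫ by linarith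
  refine nonneg_of_forall_mem_Ioc_nonneg_add_mul (c := ‖z - p‖ ^ 2 / 2) fun t ⟨ht0, ht1⟩ => ?_
  have hmin : α * f p + ‖p - x‖ ^ 2 / 2 ≤
      α * f (p + t • (z - p)) + ‖p + t • (z - p) - x‖ ^ 2 / 2 :=
    isMinOn_iff.mp hp _ (Set.mem_univ _)
  have hconvex : f (p + t • (z - p)) ≤ (1 - t) * f p + t * f z := by
    have := hf.2 (Set.mem_univ p) (Set.mem_univ z) (sub_nonneg.mpr ht1) ht0.le (sub_add_cancel 1 t)
    rwa [show (1 - t) • p + t • z = p + t • (z - p) by module] at this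
  have hnorm : ‖p + t • (z - p) - x‖ ^ 2
      = ‖x - p‖ ^ 2 - 2 * t * ⟪x - p, z - p⟫ + t ^ 2 * ‖z - p‖ ^ 2 := by
    rw [show p + t • (z - p) - x = t • (z - p) - (x - p) by module, norm_sub_sq_real,
      norm_smul, inner_smul_left, real_inner_comm, Real.norm_eq_abs, mul_pow, sq_abs]
    simp only [conj_trivial]
    ring
  rw [norm_sub_rev, hnorm] at hmin
  have hα_conv := mul_le_mul_of_nonneg_left hconvex hα
  have : 0 ≤ t * (α * (f z - f p) - ⟪x - p, z - p⟫ + t * (‖z - p‖ ^ 2 / 2)) := by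
    nlinarith
  exact (mul_nonneg_iff_of_pos_left ht0).mp this

theorem quadratic_norm_inner_nonneg {A B C : ℝ} (hC : 0 < C) (hB : B ^ 2 ≤ A * C) (d e : E) :
    0 ≤ A * ‖e‖ ^ 2 + 2 * B * ⟪d, e⟫ + C * ‖d‖ ^ 2 := by
  have hsq : ‖B • e + C • d‖ ^ 2 = B ^ 2 * ‖e‖ ^ 2 + 2 * (B * C) * ⟪d, e⟫ + C ^ 2 * ‖d‖ ^ 2 := by
    rw [norm_add_sq_real, real_inner_smul_left, real_inner_smul_right, norm_smul, norm_smul,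
      Real.norm_eq_abs, Real.norm_eq_abs, mul_pow, mul_pow, sq_abs, sq_abs, real_inner_comm d e]
    ring
  have : 0 ≤ C * (A * ‖e‖ ^ 2 + 2 * B * ⟪d, e⟫ + C * ‖d‖ ^ 2) := by
    nlinarith [sq_nonneg ‖B • e + C • d‖, sq_nonneg ‖e‖]
  exact (mul_nonneg_iff_of_pos_left hC).mp this

/-- The Lyapunov function above, for partial sum `s` of total `L`, gap `F` and squared distance `D`. -/
noncomputable def proxPotential (L s F D : ℝ) : ℝ :=
  s / (2 * L - s) * F + (L - s) / (2 * L - s) ^ 2 * D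

lemma proxPotential_zero (L F D : ℝ) : proxPotential L 0 F D = D / (4 * L) := by
  rcases eq_or_ne L 0 with rfl | hL
  · simp [proxPotential]
  · rw [proxPotential]
    field_simp
    ring

lemma proxPotential_self {L : ℝ} (hL : L ≠ 0) (F D : ℝ) : proxPotential L L F D = F := by
  rw [proxPotential]
  field_simp
  ring

theorem proxPotential_add_le {L a w F₀ F₁ : ℝ} {d e : E} (ha : 0 ≤ a) (hw : 0 < w)
    (hL : a + w ≤ L) (hI : w * F₁ ≤ ⟪d, e⟫) (hJ : ‖d‖ ^ 2 ≤ w * (F₀ - F₁)) :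
    proxPotential L (a + w) F₁ (‖e‖ ^ 2) ≤ proxPotential L a F₀ (‖e + d‖ ^ 2) := by
  -- in terms of the two denominators `p = 2L - a`, `q = 2L - (a + w)` everything is rational
  obtain ⟨p, q, rfl, rfl⟩ : ∃ p q, a = 2 * L - p ∧ w = p - q :=
    ⟨2 * L - a, 2 * L - a - w, by ring, by ring⟩
  have hq : L ≤ q := by linarith
  have hp : q < p := by linarith
  have hq₀ : 0 < q := by linarith
  have hp₀ : 0 < p := by linarith
  have hpq : p - q ≠ 0 := by linarith
  simp only [proxPotential, show 2 * L - p + (p - q) = 2 * L - q by ring,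
    show 2 * L - (2 * L - p) = p by ring, show 2 * L - (2 * L - q) = q by ring,
    show L - (2 * L - p) = p - L by ring, show L - (2 * L - q) = q - L by ring]
  -- `μ₀`, `μ₁` multiply `hJ`, `hI`; the remainder is a nonnegative quadratic form in `d`, `e`
  set μ₀ := (2 * L - p) / (p * (p - q))
  set μ₁ := 2 * L / (q * p)
  have hμ₀ : 0 ≤ μ₀ := div_nonneg ha (mul_pos hp₀ hw).le
  have hμ₁ : 0 ≤ μ₁ := div_nonneg (by linarith) (mul_pos hq₀ hp₀).le
  have hl₀ : (2 * L - p) / p = μ₀ * (p - q) := by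
    simp only [μ₀]; field_simp
  have hl₁ : (2 * L - q) / q = (2 * L - p) / p + μ₁ * (p - q) := by
    simp only [μ₁]; field_simp; ring
  have hC : 0 < (p - L) / p ^ 2 + μ₀ := by
    have : 0 < (p - L) / p ^ 2 := div_pos (by linarith) (pow_pos hp₀ 2)
    linarith
  have hB : ((p - L) / p ^ 2 - μ₁ / 2) ^ 2
      = ((p - L) / p ^ 2 - (q - L) / q ^ 2) * ((p - L) / p ^ 2 + μ₀) := by
    simp only [μ₀, μ₁]
    field_simp
    ring
  have hquad := quadratic_norm_inner_nonneg hC hB.le d e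
  rw [norm_add_sq_real, real_inner_comm d e, hl₁, hl₀]
  nlinarith [mul_le_mul_of_nonneg_left hI hμ₁, mul_le_mul_of_nonneg_left hJ hμ₀]

theorem proxPotential_prox_le {f : E → ℝ} (hf : ConvexOn ℝ Set.univ f) {L a α : ℝ} (ha : 0 ≤ a)
    (hα : 0 < α) (hL : a + α ≤ L) {x p : E}
    (hp : IsMinOn (fun z => α * f z + ‖z - x‖ ^ 2 / 2) Set.univ p) (z : E) :
    proxPotential L (a + α) (f p - f z) (‖p - z‖ ^ 2) ≤
      proxPotential L a (f x - f z) (‖x - z‖ ^ 2) := by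
  have hI : α * (f p - f z) ≤ ⟪x - p, p - z⟫ := by
    have := inner_sub_le_of_isMinOn_prox hf hα.le hp z
    rw [← neg_sub z p, inner_neg_right]
    linarith
  have hJ : ‖x - p‖ ^ 2 ≤ α * ((f x - f z) - (f p - f z)) := by
    have := inner_sub_le_of_isMinOn_prox hf hα.le hp x
    rw [real_inner_self_eq_norm_sq] at this
    linarith
  simpa only [sub_add_sub_cancel'] using proxPotential_add_le ha hα hL hI hJ

theorem stmt6_general {n : ℕ} (f : EuclideanSpace ℝ (Fin n) → ℝ)
    (hconv : ConvexOn ℝ Set.univ f)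
    (N : ℕ) (hN : 1 ≤ N) (α : ℕ → ℝ) (hα : ∀ i ∈ Finset.Icc 1 N, 0 < α i)
    (xstar : EuclideanSpace ℝ (Fin n))
    (R : ℝ)
    (x : ℕ → EuclideanSpace ℝ (Fin n)) (hx0 : ‖x 0 - xstar‖ ≤ R)
    (hiter : ∀ i ∈ Finset.Icc 1 N,
      IsMinOn (fun z => α i * f z + ‖z - x (i - 1)‖ ^ 2 / 2) Set.univ (x i)) :
    f (x N) - f xstar ≤ R ^ 2 / (4 * ∑ k ∈ Finset.Icc 1 N, α k) := by
  set s : ℕ → ℝ := fun m => ∑ k ∈ Icc 1 m, α k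
  set Φ : ℕ → ℝ := fun m => proxPotential (s N) (s m) (f (x m) - f xstar) (‖x m - xstar‖ ^ 2)
  have hsN : 0 < s N := sum_pos hα ⟨1, mem_Icc.mpr ⟨le_rfl, hN⟩⟩
  have hΦ_succ : ∀ m < N, Φ (m + 1) ≤ Φ m := by
    intro m hm
    have hmem : m + 1 ∈ Icc 1 N := mem_Icc.mpr ⟨by omega, hm⟩
    have hs : s (m + 1) = s m + α (m + 1) := sum_Icc_succ_top (by omega) α
    have hs₀ : 0 ≤ s m := sum_nonneg fun k hk => (hα k (Icc_subset_Icc_right hm.le hk)).le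
    have hsN' : s (m + 1) ≤ s N := sum_le_sum_of_subset_of_nonneg (Icc_subset_Icc_right hm)
      fun k hk _ => (hα k hk).le
    have hp := hiter _ hmem
    rw [Nat.add_sub_cancel] at hp
    simp only [Φ, hs]
    exact proxPotential_prox_le hconv hs₀ (hα _ hmem) (hs ▸ hsN') hp xstar
  have hΦ : ∀ m ≤ N, Φ m ≤ Φ 0 := by
    intro m hm
    induction m with
    | zero => exact le_rfl
    | succ m ih => exact (hΦ_succ m hm).trans (ih (by omega))
  have hs₀ : s 0 = 0 := by simp [s]
  have hΦN := hΦ N le_rfl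
  simp only [Φ, hs₀, proxPotential_zero, proxPotential_self hsN.ne'] at hΦN
  calc f (x N) - f xstar ≤ ‖x 0 - xstar‖ ^ 2 / (4 * s N) := hΦN
    _ ≤ R ^ 2 / (4 * s N) := by gcongr

/-- Tight function-value bound for the proximal point algorithm
(Theorem 4.1 of Taylor–Hendrickx–Glineur):
`f(x_N) - f(x_*) ≤ R² / (4 Σ_{i=1}^N α_i)`. -/
theorem stmt6 {n : ℕ} (f : EuclideanSpace ℝ (Fin n) → ℝ)
    (hconv : ConvexOn ℝ Set.univ f) (hlsc : LowerSemicontinuous f)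
    (N : ℕ) (hN : 1 ≤ N) (α : ℕ → ℝ) (hα : ∀ i ∈ Finset.Icc 1 N, 0 < α i)
    (xstar : EuclideanSpace ℝ (Fin n)) (hstar : ∀ z, f xstar ≤ f z)
    (R : ℝ) (hR : 0 < R)
    (x : ℕ → EuclideanSpace ℝ (Fin n)) (hx0 : ‖x 0 - xstar‖ ≤ R)
    (hiter : ∀ i ∈ Finset.Icc 1 N,
      IsMinOn (fun z => α i * f z + ‖z - x (i - 1)‖ ^ 2 / 2) Set.univ (x i)) :
    f (x N) - f xstar ≤ R ^ 2 / (4 * ∑ k ∈ Finset.Icc 1 N, α k) :=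
  stmt6_general f hconv N hN α hα xstar R x hx0 hiter
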